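/- Comparison of bounds: Let G be a finite simple bipartite graph without isolated vertices, with parts L and R. For each d in the set D_L of degrees occurring among vertices of L, let L_d be the set of vertices of L of degree d, and let R_d be the set of vertices of R adjacent to at least one vertex of L_d. Then Π_{d ∈ D_L} Π_{r ∈ R_d} (2^d + 2^{d(r)} − 1)^{1/d} ≥ Π_{{u,v} ∈ E(G)} (2^{d(u)} + 2^{d(v)} − 1)^{1/(d(u)·d(v))}, i.e., the bound of the present paper is in general at least as large as the Sah–Sawhney–Stoner–Zhao bound. -/

import Mathlib

open Finset

/-- The weight `(2^(d(u)) + 2^(d(v)) - 1)^(1/(d(u)·d(v)))` attached to an edge `{u, v}`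
of the graph `G`, as a symmetric function on `Sym2 V`. -/
noncomputable def edgeWeight {V : Type*} (G : SimpleGraph V)
    [∀ v, Fintype (G.neighborSet v)] : Sym2 V → ℝ :=
  Sym2.lift
    ⟨fun u v => ((2 : ℝ) ^ (G.degree u) + 2 ^ (G.degree v) - 1) ^
        (1 / ((G.degree u : ℝ) * (G.degree v : ℝ))),
      fun u v => by
        dsimp only
        rw [add_comm ((2 : ℝ) ^ (G.degree u)) ((2 : ℝ) ^ (G.degree v)),
          mul_comm ((G.degree u : ℝ)) ((G.degree v : ℝ))]⟩

/-! Every edge `{l, r}` with `l ∈ L` of degree `d` is charged to the pair `(d, r)`. At most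
`d(r)` edges are charged to a given pair, each of weight `c^(1/(d·d(r)))` with
`c = 2^d + 2^(d(r)) - 1 ≥ 1`, so together they weigh at most `c^(1/d)`, the factor of `(d, r)`
in the left-hand side. As all weights are at least `1`, an edge charged twice (through both of
its ends) only increases the product. -/

theorem Finset.prod_image_le_prod_comp_of_one_le {ι κ R : Type*} [DecidableEq κ]
    [CommMonoidWithZero R] [PartialOrder R] [ZeroLEOneClass R] [PosMulMono R]
    {s : Finset ι} {g : ι → κ} {f : κ → R} (hf : ∀ b ∈ s.image g, 1 ≤ f b) :
    ∏ b ∈ s.image g, f b ≤ ∏ a ∈ s, f (g a) := by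
  rw [prod_comp f g]
  refine prod_le_prod (fun b hb => zero_le_one.trans (hf b hb)) fun b hb => ?_
  obtain ⟨a, ha, hab⟩ := mem_image.mp hb
  exact le_self_pow₀ (hf b hb) (card_pos.mpr ⟨a, mem_filter.mpr ⟨ha, hab⟩⟩).ne'

theorem rpow_one_div_mul_pow_le {c d : ℝ} {k m : ℕ} (hc : 1 ≤ c) (hd : 0 ≤ d) (hkm : k ≤ m) :
    (c ^ (1 / (d * m))) ^ k ≤ c ^ (1 / d) := by
  rw [← Real.rpow_natCast, ← Real.rpow_mul (by linarith)]
  refine Real.rpow_le_rpow_of_exponent_le hc ?_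
  calc 1 / (d * m) * k = 1 / d * (k / m) := by ring
    _ ≤ 1 / d := mul_le_of_le_one_right (one_div_nonneg.mpr hd)
      (div_le_one_of_le₀ (by exact_mod_cast hkm) m.cast_nonneg)

theorem one_le_two_pow_add_two_pow_sub_one (a b : ℕ) : (1 : ℝ) ≤ 2 ^ a + 2 ^ b - 1 := by
  linarith [one_le_pow₀ (M₀ := ℝ) (n := a) one_le_two, one_le_pow₀ (M₀ := ℝ) (n := b) one_le_two]

namespace SimpleGraph

variable {V : Type*} [Fintype V] (G : SimpleGraph V) [DecidableRel G.Adj]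

theorem one_le_edgeWeight (e : Sym2 V) : 1 ≤ edgeWeight G e := by
  induction e with
  | h u v =>
    exact Real.one_le_rpow (one_le_two_pow_add_two_pow_sub_one _ _)
      (one_div_nonneg.mpr (by positivity))

theorem edgeFinset_eq_image_of_bipartite [DecidableEq V] {L R : Finset V}
    (hbip : ∀ u v, G.Adj u v → (u ∈ L ∧ v ∈ R) ∨ (u ∈ R ∧ v ∈ L)) :
    G.edgeFinset = ((L ×ˢ R).filter fun p => G.Adj p.1 p.2).image fun p => s(p.1, p.2) := by
  ext e
  induction e with
  | h u v =>
    simp only [mem_edgeFinset, mem_edgeSet, mem_image, mem_filter, mem_product, Prod.exists]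
    constructor
    · intro huv
      rcases hbip u v huv with ⟨hu, hv⟩ | ⟨hu, hv⟩
      · exact ⟨u, v, ⟨⟨hu, hv⟩, huv⟩, rfl⟩
      · exact ⟨v, u, ⟨⟨hv, hu⟩, huv.symm⟩, Sym2.eq_swap⟩
    · rintro ⟨l, r, ⟨_, hlr⟩, hluv⟩
      exact (G.mem_edgeSet.mp (hluv ▸ hlr : s(u, v) ∈ G.edgeSet))

theorem prod_adj_pairs_eq_prod_degree_prod {M : Type*} [CommMonoid M] (L R : Finset V)
    (F : V × V → M) :
    ∏ p ∈ (L ×ˢ R).filter (fun p => G.Adj p.1 p.2), F p =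
      ∏ d ∈ L.image (fun v => G.degree v),
        ∏ r ∈ R.filter (fun r => ∃ l ∈ L, G.degree l = d ∧ G.Adj l r),
          ∏ l ∈ L.filter (fun l => G.degree l = d ∧ G.Adj l r), F (l, r) := by
  rw [← prod_fiberwise_of_maps_to (g := fun p => G.degree p.1) (t := L.image fun v => G.degree v)
    fun p hp => mem_image_of_mem _ (mem_product.mp (mem_filter.mp hp).1).1]
  refine prod_congr rfl fun d _ => prod_finset_product_right _ _ _ fun ⟨l, r⟩ => ?_
  simp only [mem_filter, mem_product]
  constructor
  · rintro ⟨⟨⟨hl, hr⟩, hlr⟩, rfl⟩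
    exact ⟨⟨hr, l, hl, rfl, hlr⟩, hl, rfl, hlr⟩
  · rintro ⟨⟨hr, -⟩, hl, rfl, hlr⟩
    exact ⟨⟨⟨hl, hr⟩, hlr⟩, rfl⟩

theorem prod_edgeWeight_degree_class_le (L : Finset V) (d : ℕ) (r : V) :
    ∏ l ∈ L.filter (fun l => G.degree l = d ∧ G.Adj l r), edgeWeight G s(l, r) ≤
      ((2 : ℝ) ^ d + 2 ^ (G.degree r) - 1) ^ (1 / (d : ℝ)) := by
  have hweight : ∀ l ∈ L.filter (fun l => G.degree l = d ∧ G.Adj l r), edgeWeight G s(l, r) =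
      ((2 : ℝ) ^ d + 2 ^ (G.degree r) - 1) ^ (1 / ((d : ℝ) * G.degree r)) := by
    intro l hl
    rw [← (mem_filter.mp hl).2.1]
    rfl
  have hcard : #(L.filter fun l => G.degree l = d ∧ G.Adj l r) ≤ G.degree r := by
    rw [← card_neighborFinset_eq_degree]
    exact card_le_card fun l hl => (G.mem_neighborFinset r l).mpr (mem_filter.mp hl).2.2.symm
  rw [prod_congr rfl hweight, prod_const]
  exact rpow_one_div_mul_pow_le (one_le_two_pow_add_two_pow_sub_one _ _) d.cast_nonneg hcard

end SimpleGraph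

theorem bound_comparison_general {V : Type*} [Fintype V]
    (G : SimpleGraph V) [DecidableRel G.Adj] (L R : Finset V)
    (hbip : ∀ u v, G.Adj u v → (u ∈ L ∧ v ∈ R) ∨ (u ∈ R ∧ v ∈ L)) :
    ∏ d ∈ L.image (fun v => G.degree v),
        ∏ r ∈ R.filter (fun r => ∃ l ∈ L, G.degree l = d ∧ G.Adj l r),
          ((2 : ℝ) ^ d + 2 ^ (G.degree r) - 1) ^ (1 / (d : ℝ)) ≥
      ∏ e ∈ G.edgeFinset, edgeWeight G e := by
  classical
  have hnonneg : ∀ e, 0 ≤ edgeWeight G e := fun e => zero_le_one.trans (G.one_le_edgeWeight e)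
  calc ∏ e ∈ G.edgeFinset, edgeWeight G e
      ≤ ∏ p ∈ (L ×ˢ R).filter (fun p => G.Adj p.1 p.2), edgeWeight G s(p.1, p.2) := by
        rw [G.edgeFinset_eq_image_of_bipartite hbip]
        exact prod_image_le_prod_comp_of_one_le fun e _ => G.one_le_edgeWeight e
    _ = ∏ d ∈ L.image (fun v => G.degree v),
        ∏ r ∈ R.filter (fun r => ∃ l ∈ L, G.degree l = d ∧ G.Adj l r),
          ∏ l ∈ L.filter (fun l => G.degree l = d ∧ G.Adj l r), edgeWeight G s(l, r) :=
        G.prod_adj_pairs_eq_prod_degree_prod L R _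
    _ ≤ _ := prod_le_prod (fun _ _ => prod_nonneg fun _ _ => prod_nonneg fun _ _ => hnonneg _)
        fun d _ => prod_le_prod (fun _ _ => prod_nonneg fun _ _ => hnonneg _)
          fun r _ => G.prod_edgeWeight_degree_class_le L d r

/-- **Comparison of bounds.** For a finite simple bipartite graph `G` without isolated
vertices, with parts `L` and `R`, the bound of the present paper,
`∏_{d ∈ D_L} ∏_{r ∈ R_d} (2^d + 2^(d(r)) - 1)^(1/d)`, is at least as large as the
Sah–Sawhney–Stoner–Zhao bound
`∏_{{u,v} ∈ E(G)} (2^(d(u)) + 2^(d(v)) - 1)^(1/(d(u)·d(v)))`. -/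
theorem bound_comparison {V : Type*} [Fintype V] [DecidableEq V]
    (G : SimpleGraph V) [DecidableRel G.Adj] (L R : Finset V)
    (hdisj : Disjoint L R) (hunion : L ∪ R = Finset.univ)
    (hbip : ∀ u v, G.Adj u v → (u ∈ L ∧ v ∈ R) ∨ (u ∈ R ∧ v ∈ L))
    (hiso : ∀ v : V, 0 < G.degree v) :
    ∏ d ∈ L.image (fun v => G.degree v),
        ∏ r ∈ R.filter (fun r => ∃ l ∈ L, G.degree l = d ∧ G.Adj l r),
          ((2 : ℝ) ^ d + 2 ^ (G.degree r) - 1) ^ (1 / (d : ℝ)) ≥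
      ∏ e ∈ G.edgeFinset, edgeWeight G e :=
  bound_comparison_general G L R hbip
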